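/- arXiv:1503.08546 — 2 statements merged into one kernel-verified Lean document; each statement's English description precedes it below -/
import Mathlib

section
/- For every n ≥ 0 and every f ∈ A_n (homogeneous of total degree n in the variables u_k), one has δ(u_0 · δf) = n · δf. -/
/-!
`∂ₓ` is the derivation `D` with `D u_k = u_{k+1}`, and `δ` is linear and kills `Im D`: from the
commutation rule `∂/∂u_{k+1} ∘ D = D ∘ ∂/∂u_{k+1} + ∂/∂u_k` the sum defining `δ (D g)` telescopes.
Integrating by parts `k` times, `u₀ · (-1)^k D^k g ≡ (D^k u₀) · g = u_k · g` modulo `Im D`, so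
`u₀ · δf ≡ Σ_k u_k ∂f/∂u_k = n f` by Euler's identity, and applying `δ` gives `δ(u₀ δf) = n δf`.
-/

open MvPolynomial

/-- The derivation `∂ₓ = Σ_{k≥0} u_{k+1} ∂/∂u_k` on `A = ℝ[u₀, u₁, …]`
(the sum is finite on each polynomial). -/
noncomputable def dx (f : MvPolynomial ℕ ℝ) : MvPolynomial ℕ ℝ :=
  ∑ᶠ k : ℕ, X (k + 1) * pderiv k f

/-- The variational derivative `δ = Σ_{k≥0} (−1)^k ∂ₓ^k ∘ (∂/∂u_k)`
(the sum is finite on each polynomial). -/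
noncomputable def delta (f : MvPolynomial ℕ ℝ) : MvPolynomial ℕ ℝ :=
  ∑ᶠ k : ℕ, ((-1 : ℝ) ^ k) • (dx^[k] (pderiv k f))

open Finset

namespace MvPolynomial

section CommSemiring

variable {σ R : Type*} [CommSemiring R]

theorem pderiv_eq_zero_of_vars_subset {s : Finset σ} {f : MvPolynomial σ R} (hs : f.vars ⊆ s)
    {k : σ} (hk : k ∉ s) : pderiv k f = 0 :=
  pderiv_eq_zero_of_notMem_vars fun h => hk (hs h)

theorem derivation_apply_eq_sum_mul_pderiv
    (D : Derivation R (MvPolynomial σ R) (MvPolynomial σ R)) {s : Finset σ}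
    {f : MvPolynomial σ R} (hs : f.vars ⊆ s) :
    D f = ∑ i ∈ s, D (X i) * pderiv i f := by
  have hsum : ∀ g, (∑ i ∈ s, D (X i) • pderiv i) g = ∑ i ∈ s, D (X i) * pderiv i g := fun g => by
    rw [← Derivation.coeFnAddMonoidHom_apply (∑ i ∈ s, _), map_sum, Finset.sum_apply]
    rfl
  rw [← hsum]
  refine derivation_eq_of_forall_mem_vars fun j hj => ?_
  rw [hsum, sum_eq_single_of_mem j (hs hj) fun i _ hij => by simp [pderiv_X_of_ne hij.symm]]
  simp

theorem IsHomogeneous.sum_X_mul_pderiv_of_vars_subset {n : ℕ} {s : Finset σ}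
    {f : MvPolynomial σ R} (hf : f.IsHomogeneous n) (hs : f.vars ⊆ s) :
    ∑ i ∈ s, X i * pderiv i f = n • f := by
  have hmonomial : ∀ d ∈ f.support,
      ∑ i ∈ s, X i * pderiv i (monomial d (coeff d f)) = n • monomial d (coeff d f) := by
    intro d hd
    have hds : d.support ⊆ s := fun i hi => hs ((mem_vars_iff_mem_support i).2 ⟨d, hd, hi⟩)
    simp_rw [X_mul_pderiv_monomial, ← sum_smul]
    rw [← sum_subset hds fun i _ hi => Finsupp.notMem_support_iff.1 hi,
      ← hf.degree_eq_sum_deg_support hd]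
  conv_lhs => rw [← f.support_sum_monomial_coeff]
  simp_rw [map_sum, mul_sum]
  rw [sum_comm, sum_congr rfl hmonomial, ← smul_sum, f.support_sum_monomial_coeff]

end CommSemiring

theorem derivation_apply_apply_eq_add_of_forall_X {σ R : Type*} [CommRing R]
    {D₁ D₂ E : Derivation R (MvPolynomial σ R) (MvPolynomial σ R)}
    (h : ∀ i, D₁ (D₂ (X i)) - D₂ (D₁ (X i)) = E (X i)) (f : MvPolynomial σ R) :
    D₁ (D₂ f) = D₂ (D₁ f) + E f := by
  have hE : ⁅D₁, D₂⁆ = E := derivation_ext fun i => by rw [Derivation.commutator_apply, h]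
  rw [← hE, Derivation.commutator_apply, add_sub_cancel]

end MvPolynomial

namespace Derivation

theorem iterate_map_smul {R A : Type*} [CommSemiring R] [CommSemiring A] [Algebra R A]
    (D : Derivation R A A) (k : ℕ) (c : R) (x : A) :
    D^[k] (c • x) = c • D^[k] x := by
  induction k generalizing x with
  | zero => rfl
  | succ k ih => rw [Function.iterate_succ_apply, Function.iterate_succ_apply, D.map_smul, ih]

theorem neg_one_pow_smul_mul_iterate_smodEq {R A : Type*} [CommRing R] [CommRing A] [Algebra R A]
    (D : Derivation R A A) (k : ℕ) (w h : A) :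
    ((-1 : R) ^ k) • (w * D^[k] h) ≡ D^[k] w * h [SMOD LinearMap.range D.toLinearMap] := by
  induction k generalizing w with
  | zero => simp [SModEq.refl]
  | succ k ih =>
    have hleibniz : ((-1 : R) ^ (k + 1)) • (w * D^[k + 1] h)
        = ((-1 : R) ^ k) • (D w * D^[k] h) + D (((-1 : R) ^ (k + 1)) • (w * D^[k] h)) := by
      rw [Function.iterate_succ_apply', D.map_smul, D.leibniz, smul_eq_mul, smul_eq_mul,
        mul_comm (D^[k] h), pow_succ]
      module
    rw [hleibniz, Function.iterate_succ_apply]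
    refine SModEq.trans ?_ (ih (D w))
    rw [SModEq.sub_mem, add_sub_cancel_left]
    exact LinearMap.mem_range_self _ _

end Derivation

noncomputable def totalDeriv (R : Type*) [CommSemiring R] :
    Derivation R (MvPolynomial ℕ R) (MvPolynomial ℕ R) :=
  mkDerivation R fun k => X (k + 1)

section totalDeriv

variable {R : Type*}

theorem totalDeriv_X [CommSemiring R] (k : ℕ) : totalDeriv R (X k) = X (k + 1) :=
  mkDerivation_X _ _ _

theorem totalDeriv_iterate_X [CommSemiring R] (k i : ℕ) : (totalDeriv R)^[k] (X i) = X (i + k) := by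
  induction k with
  | zero => rfl
  | succ k ih => rw [Function.iterate_succ_apply', ih, totalDeriv_X, add_assoc]

theorem pderiv_zero_totalDeriv [CommRing R] (f : MvPolynomial ℕ R) :
    pderiv 0 (totalDeriv R f) = totalDeriv R (pderiv 0 f) := by
  simpa using derivation_apply_apply_eq_add_of_forall_X (E := 0)
    (fun i => by simp [totalDeriv_X, pderiv_X, Pi.single_apply, apply_ite (totalDeriv R)]) f

theorem pderiv_succ_totalDeriv [CommRing R] (k : ℕ) (f : MvPolynomial ℕ R) :
    pderiv (k + 1) (totalDeriv R f) = totalDeriv R (pderiv (k + 1) f) + pderiv k f :=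
  derivation_apply_apply_eq_add_of_forall_X
    (fun i => by simp [totalDeriv_X, pderiv_X, Pi.single_apply, apply_ite (totalDeriv R)]) f

end totalDeriv

theorem dx_eq_totalDeriv : dx = totalDeriv ℝ := by
  ext1 f
  rw [dx, finsum_eq_sum_of_support_subset (s := f.vars) _ fun k hk => ?_,
    derivation_apply_eq_sum_mul_pderiv _ subset_rfl]
  · simp only [totalDeriv_X]
  · contrapose! hk
    rw [Function.notMem_support, pderiv_eq_zero_of_notMem_vars hk, mul_zero]

theorem delta_eq_sum {f : MvPolynomial ℕ ℝ} {s : Finset ℕ} (hs : ∀ k ∉ s, pderiv k f = 0) :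
    delta f = ∑ k ∈ s, ((-1 : ℝ) ^ k) • (totalDeriv ℝ)^[k] (pderiv k f) := by
  rw [delta, dx_eq_totalDeriv]
  refine finsum_eq_sum_of_support_subset _ fun k hk => ?_
  contrapose! hk
  rw [Function.notMem_support, hs k hk, iterate_map_zero, smul_zero]

theorem delta_add (f g : MvPolynomial ℕ ℝ) : delta (f + g) = delta f + delta g := by
  have hf : f.vars ⊆ f.vars ∪ g.vars := subset_union_left
  have hg : g.vars ⊆ f.vars ∪ g.vars := subset_union_right
  rw [delta_eq_sum fun k hk => by rw [map_add, pderiv_eq_zero_of_vars_subset hf hk,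
      pderiv_eq_zero_of_vars_subset hg hk, add_zero],
    delta_eq_sum fun k => pderiv_eq_zero_of_vars_subset hf,
    delta_eq_sum fun k => pderiv_eq_zero_of_vars_subset hg, ← sum_add_distrib]
  simp only [map_add, iterate_map_add, smul_add]

theorem delta_smul (c : ℝ) (f : MvPolynomial ℕ ℝ) : delta (c • f) = c • delta f := by
  have hf : ∀ k ∉ f.vars, pderiv k f = 0 := fun k => pderiv_eq_zero_of_vars_subset subset_rfl
  rw [delta_eq_sum fun k hk => by rw [Derivation.map_smul, hf k hk, smul_zero], delta_eq_sum hf,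
    smul_sum]
  simp only [Derivation.map_smul, Derivation.iterate_map_smul, smul_comm c]

theorem delta_totalDeriv (g : MvPolynomial ℕ ℝ) : delta (totalDeriv ℝ g) = 0 := by
  obtain ⟨N, hN⟩ := g.vars.exists_nat_subset_range
  have hg : ∀ k, N ≤ k → pderiv k g = 0 := fun k hk =>
    pderiv_eq_zero_of_vars_subset hN (by simpa using hk)
  have hDg : ∀ k ∉ range (N + 1), pderiv k (totalDeriv ℝ g) = 0 := by
    rintro (_ | k) hk
    · simp at hk
    · rw [mem_range, not_lt] at hk
      rw [pderiv_succ_totalDeriv, hg (k + 1) (by omega), hg k (by omega), map_zero, add_zero]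
  set a : ℕ → MvPolynomial ℕ ℝ := fun m => ((-1 : ℝ) ^ m) • (totalDeriv ℝ)^[m + 1] (pderiv m g)
  have hterm : ∀ m, ((-1 : ℝ) ^ (m + 1)) •
      (totalDeriv ℝ)^[m + 1] (pderiv (m + 1) (totalDeriv ℝ g)) = a (m + 1) - a m := fun m => by
    rw [pderiv_succ_totalDeriv, iterate_map_add, ← Function.iterate_succ_apply, pow_succ]
    module
  have haN : a N = 0 := by simp only [a, hg N le_rfl, iterate_map_zero, smul_zero]
  have ha0 : a 0 = pderiv 0 (totalDeriv ℝ g) := by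
    simp only [a, pow_zero, one_smul, zero_add, Function.iterate_one, pderiv_zero_totalDeriv]
  rw [delta_eq_sum hDg, sum_range_succ', sum_congr rfl fun m _ => hterm m, sum_range_sub, haN, ha0,
    pow_zero, one_smul, Function.iterate_zero_apply, zero_sub, neg_add_cancel]

theorem delta_eq_of_smodEq {f g : MvPolynomial ℕ ℝ}
    (h : f ≡ g [SMOD LinearMap.range (totalDeriv ℝ).toLinearMap]) : delta f = delta g := by
  obtain ⟨r, hr⟩ := SModEq.sub_mem.1 h
  rw [← sub_add_cancel f g, delta_add, ← hr, Derivation.coeFn_coe, delta_totalDeriv, zero_add]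

/-- for `f ∈ A_n` homogeneous of total degree `n`,
`δ(u₀ · δf) = n · δf`. -/
theorem delta_u0_delta_eq_smul :
    ∀ (n : ℕ) (f : MvPolynomial ℕ ℝ), f.IsHomogeneous n →
      delta (X 0 * delta f) = (n : ℝ) • delta f := by
  intro n f hf
  obtain ⟨N, hN⟩ := f.vars.exists_nat_subset_range
  have hcongr : X 0 * delta f ≡ (n : ℝ) • f [SMOD LinearMap.range (totalDeriv ℝ).toLinearMap] := by
    rw [delta_eq_sum fun k => pderiv_eq_zero_of_vars_subset hN, mul_sum, Nat.cast_smul_eq_nsmul,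
      ← hf.sum_X_mul_pderiv_of_vars_subset hN]
    refine SModEq.sum fun k _ => ?_
    simpa only [mul_smul_comm, totalDeriv_iterate_X, zero_add] using
      (totalDeriv ℝ).neg_one_pow_smul_mul_iterate_smodEq k (X 0) (pderiv k f)
  rw [delta_eq_of_smodEq hcongr, delta_smul]
end

section
/- Each Gelfand–Dickey polynomial R_n involves only even powers of λ, and writing R_n = Σ_{g≥0} R_n^{(g)} λ^{2g} with R_n^{(g)} ∈ A, the coefficient R_n^{(g)} is homogeneous of total degree n − g in the variables u_k (and vanishes when g > n): R_n^{(g)} ∈ A_{n−g}. -/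
/-!
Give each `u_k` weight 2 and `λ` weight 1. Multiplication by `u₀`, `u₁` or `λ²` raises the weight
by 2 and `∂ₓ` preserves it, so the right-hand side of the Lenard recursion has weight `2n + 2`
when `R_n` has weight `2n`. Conversely, on polynomials without constant term `∂ₓ` is injective and
reflects homogeneity: if `u_N` is the highest variable of a nonconstant `f`, then
`∂(∂ₓ f)/∂u_{N+1} = ∂f/∂u_N ≠ 0`, and `∂ₓ` commutes with taking homogeneous components.
By induction `R_n` is homogeneous of weight `2n`, i.e. the coefficient of `λ^i` is homogeneous of
degree `n - i/2` and vanishes unless `i` is even and at most `2n`.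
-/

open MvPolynomial

/-- The λ-linear extension of `∂ₓ` to `A[λ]` (acting on coefficients). -/
noncomputable def dxP (p : Polynomial (MvPolynomial ℕ ℝ)) :
    Polynomial (MvPolynomial ℕ ℝ) :=
  p.sum fun n a => Polynomial.C (dx a) * Polynomial.X ^ n

/-- `p ∈ A[λ]` has zero constant term: the constant term (in the variables `u_k`)
of every `λ`-coefficient of `p` vanishes. -/
def NoConst (p : Polynomial (MvPolynomial ℕ ℝ)) : Prop :=
  ∀ i : ℕ, coeff 0 (p.coeff i) = 0

/-- `R : ℕ → A[λ]` is the sequence of Gelfand–Dickey polynomials: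
`R 0 = 1`, each `R n` for `n ≥ 1` has zero constant term, and the Lenard recursion
`(2n+1) ∂ₓ R_{n+1} = u₁ R_n + 2 u₀ ∂ₓ R_n + (λ²/4) ∂ₓ³ R_n` holds. -/
def IsGD (R : ℕ → Polynomial (MvPolynomial ℕ ℝ)) : Prop :=
  R 0 = 1 ∧ (∀ n : ℕ, 1 ≤ n → NoConst (R n)) ∧
  ∀ n : ℕ,
    Polynomial.C (MvPolynomial.C (2 * (n : ℝ) + 1)) * dxP (R (n + 1)) =
      Polynomial.C (X 1) * R n
      + Polynomial.C (MvPolynomial.C 2 * X 0) * dxP (R n)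
      + Polynomial.C (MvPolynomial.C (1 / 4 : ℝ)) * Polynomial.X ^ 2
          * dxP (dxP (dxP (R n)))

namespace MvPolynomial

variable {R σ : Type*} [CommSemiring R]

theorem pderiv_pderiv_comm (i j : σ) (f : MvPolynomial σ R) :
    pderiv i (pderiv j f) = pderiv j (pderiv i f) := by
  obtain rfl | hij := eq_or_ne i j
  · rfl
  ext d
  simp only [coeff_pderiv, Finsupp.add_apply, Finsupp.single_eq_of_ne hij,
    Finsupp.single_eq_of_ne hij.symm, add_zero, add_right_comm d]
  ring

theorem pderiv_ne_zero_of_mem_vars [NoZeroDivisors R] [CharZero R] {i : σ}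
    {f : MvPolynomial σ R} (h : i ∈ f.vars) : pderiv i f ≠ 0 := by
  obtain ⟨d, hd, hi⟩ := (mem_vars_iff_mem_support i).1 h
  have hle : Finsupp.single i 1 ≤ d :=
    Finsupp.single_le_iff.2 (Nat.one_le_iff_ne_zero.2 (Finsupp.mem_support_iff.1 hi))
  intro h0
  have := coeff_pderiv (i := i) f (d - Finsupp.single i 1)
  rw [h0, coeff_zero, tsub_add_cancel_of_le hle, eq_comm] at this
  exact mul_ne_zero (mem_support_iff.1 hd) (by norm_cast) this

end MvPolynomial

section Dx

variable {f : MvPolynomial ℕ ℝ}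

theorem dx_eq_sum_of_vars_subset {s : Finset ℕ} (h : f.vars ⊆ s) :
    dx f = ∑ k ∈ s, X (k + 1) * pderiv k f := by
  refine finsum_eq_sum_of_support_subset _ fun k hk => ?_
  by_contra hks
  exact hk (by simp only [pderiv_eq_zero_of_notMem_vars fun hkf => hks (h hkf), mul_zero])

theorem dx_zero : dx 0 = 0 := by
  simp [dx_eq_sum_of_vars_subset (vars_0 (σ := ℕ) (R := ℝ)).subset]

theorem dx_add (f g : MvPolynomial ℕ ℝ) : dx (f + g) = dx f + dx g := by
  classical
  rw [dx_eq_sum_of_vars_subset (vars_add_subset f g),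
    dx_eq_sum_of_vars_subset (Finset.subset_union_left (s₂ := g.vars)),
    dx_eq_sum_of_vars_subset (Finset.subset_union_right (s₁ := f.vars)),
    ← Finset.sum_add_distrib]
  simp only [map_add, mul_add]

theorem MvPolynomial.IsHomogeneous.dx {m : ℕ} (hf : f.IsHomogeneous m) :
    (dx f).IsHomogeneous m := by
  rw [dx_eq_sum_of_vars_subset subset_rfl]
  refine IsHomogeneous.sum _ _ _ fun k _ => ?_
  obtain _ | m := m
  · rw [← totalDegree_zero_iff_isHomogeneous, totalDegree_eq_zero_iff_eq_C] at hf
    rw [hf, pderiv_C, mul_zero]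
    exact isHomogeneous_zero _ _ _
  · simpa [add_comm] using (isHomogeneous_X ℝ (k + 1)).mul hf.pderiv

theorem pderiv_succ_dx {N : ℕ} (hN : N + 1 ∉ f.vars) : pderiv (N + 1) (dx f) = pderiv N f := by
  classical
  rw [dx_eq_sum_of_vars_subset (Finset.subset_insert N f.vars), map_sum,
    Finset.sum_eq_single_of_mem N (Finset.mem_insert_self N f.vars)]
  · rw [pderiv_mul, pderiv_X_self, one_mul, pderiv_pderiv_comm,
      pderiv_eq_zero_of_notMem_vars hN, map_zero, mul_zero, add_zero]
  · intro k _ hkN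
    rw [pderiv_mul, pderiv_X_of_ne (by omega), zero_mul, pderiv_pderiv_comm,
      pderiv_eq_zero_of_notMem_vars hN, map_zero, mul_zero, add_zero]

theorem vars_eq_empty_of_dx_eq_zero (h : dx f = 0) : f.vars = ∅ := by
  by_contra hne
  have hf := Finset.nonempty_iff_ne_empty.2 hne
  have hN : f.vars.max' hf + 1 ∉ f.vars := fun hmem => by
    have := f.vars.le_max' _ hmem
    omega
  apply pderiv_ne_zero_of_mem_vars (f.vars.max'_mem hf)
  rw [← pderiv_succ_dx hN, h, map_zero]

theorem eq_zero_of_dx_eq_zero (h : dx f = 0) (h0 : coeff 0 f = 0) : f = 0 := by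
  rw [vars_eq_empty_iff_eq_C.1 (vars_eq_empty_of_dx_eq_zero h), h0, map_zero]

theorem homogeneousComponent_dx (e : ℕ) (f : MvPolynomial ℕ ℝ) :
    homogeneousComponent e (dx f) = dx (homogeneousComponent e f) := by
  let dxHom : MvPolynomial ℕ ℝ →+ MvPolynomial ℕ ℝ := AddMonoidHom.mk' dx dx_add
  calc homogeneousComponent e (dx f)
      = homogeneousComponent e (∑ j ∈ Finset.range (f.totalDegree + 1),
          dx (homogeneousComponent j f)) := by
        congr 1
        conv_lhs => rw [← sum_homogeneousComponent f]
        exact map_sum dxHom _ _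
    _ = ∑ j ∈ Finset.range (f.totalDegree + 1),
          if e = j then dx (homogeneousComponent j f) else 0 := by
        rw [map_sum]
        exact Finset.sum_congr rfl fun j _ =>
          homogeneousComponent_of_mem (homogeneousComponent_isHomogeneous j f).dx
    _ = dx (homogeneousComponent e f) := by
        rw [Finset.sum_ite_eq]
        split_ifs with he
        · rfl
        · rw [homogeneousComponent_eq_zero _ _ (by simpa using he), dx_zero]

theorem isHomogeneous_of_isHomogeneous_dx {m : ℕ} (h0 : coeff 0 f = 0)
    (h : (dx f).IsHomogeneous m) : f.IsHomogeneous m := by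
  intro d hd
  by_contra hne
  rw [Pi.one_def, ← Finsupp.degree_eq_weight_one] at hne
  have hcomp : homogeneousComponent d.degree f = 0 := by
    refine eq_zero_of_dx_eq_zero ?_ ?_
    · rw [← homogeneousComponent_dx, homogeneousComponent_of_mem h, if_neg hne]
    · simp [coeff_homogeneousComponent, h0]
  apply hd
  simpa [coeff_homogeneousComponent] using congrArg (coeff d) hcomp

end Dx

theorem coeff_dxP (p : Polynomial (MvPolynomial ℕ ℝ)) (i : ℕ) :
    (dxP p).coeff i = dx (p.coeff i) := by
  rw [dxP, Polynomial.sum_def, Polynomial.finsetSum_coeff]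
  simp only [Polynomial.coeff_C_mul_X_pow, Finset.sum_ite_eq, Polynomial.mem_support_iff]
  split_ifs with h
  · rfl
  · rw [not_not.1 h, dx_zero]

section WeightHomogeneous

variable {σ R : Type*} [CommSemiring R] {w : ℕ} {p q : Polynomial (MvPolynomial σ R)}

def IsWeightHomogeneous (w : ℕ) (p : Polynomial (MvPolynomial σ R)) : Prop :=
  ∀ i, p.coeff i ≠ 0 → ∃ m, 2 * m + i = w ∧ (p.coeff i).IsHomogeneous m

theorem isWeightHomogeneous_one : IsWeightHomogeneous 0 (1 : Polynomial (MvPolynomial σ R)) := by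
  intro i hi
  rw [Polynomial.coeff_one] at hi ⊢
  split_ifs at hi ⊢ with h
  · exact ⟨0, by omega, isHomogeneous_one σ R⟩
  · exact absurd rfl hi

theorem IsWeightHomogeneous.add (hp : IsWeightHomogeneous w p) (hq : IsWeightHomogeneous w q) :
    IsWeightHomogeneous w (p + q) := by
  intro i hi
  rw [Polynomial.coeff_add] at hi ⊢
  by_cases hpi : p.coeff i = 0
  · rw [hpi, zero_add] at hi ⊢
    exact hq i hi
  by_cases hqi : q.coeff i = 0
  · rw [hqi, add_zero]
    exact hp i hpi
  obtain ⟨m, hm, hpm⟩ := hp i hpi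
  obtain ⟨m', hm', hqm⟩ := hq i hqi
  rw [show m' = m by omega] at hqm
  exact ⟨m, hm, hpm.add hqm⟩

theorem IsWeightHomogeneous.C_mul (hp : IsWeightHomogeneous w p) {a : MvPolynomial σ R} {k : ℕ}
    (ha : a.IsHomogeneous k) : IsWeightHomogeneous (w + 2 * k) (Polynomial.C a * p) := by
  intro i hi
  rw [Polynomial.coeff_C_mul] at hi ⊢
  obtain ⟨m, hm, hpm⟩ := hp i (right_ne_zero_of_mul hi)
  exact ⟨k + m, by omega, ha.mul hpm⟩

theorem IsWeightHomogeneous.X_pow_mul (hp : IsWeightHomogeneous w p) (k : ℕ) :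
    IsWeightHomogeneous (w + k) (Polynomial.X ^ k * p) := by
  intro i hi
  rw [Polynomial.coeff_X_pow_mul'] at hi ⊢
  split_ifs at hi ⊢ with hk
  · obtain ⟨m, hm, hpm⟩ := hp (i - k) hi
    exact ⟨m, by omega, hpm⟩
  · exact absurd rfl hi

end WeightHomogeneous

section WeightHomogeneousDxP

variable {w : ℕ} {p : Polynomial (MvPolynomial ℕ ℝ)}

theorem IsWeightHomogeneous.dxP (hp : IsWeightHomogeneous w p) :
    IsWeightHomogeneous w (_root_.dxP p) := by
  intro i hi
  rw [coeff_dxP] at hi ⊢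
  obtain ⟨m, hm, hpm⟩ := hp i fun h0 => hi (by rw [h0, dx_zero])
  exact ⟨m, hm, hpm.dx⟩

theorem IsWeightHomogeneous.of_C_mul_dxP {c : ℝ} (hc : c ≠ 0) (hp : NoConst p)
    (h : IsWeightHomogeneous w (Polynomial.C (C c) * _root_.dxP p)) :
    IsWeightHomogeneous w p := by
  intro i hi
  have hdx : C c * dx (p.coeff i) ≠ 0 :=
    mul_ne_zero (C_ne_zero.2 hc) fun h0 => hi (eq_zero_of_dx_eq_zero h0 (hp i))
  obtain ⟨m, hm, hhom⟩ := h i (by rwa [Polynomial.coeff_C_mul, coeff_dxP])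
  rw [Polynomial.coeff_C_mul, coeff_dxP] at hhom
  refine ⟨m, hm, isHomogeneous_of_isHomogeneous_dx (hp i) ?_⟩
  simpa [← mul_assoc, ← MvPolynomial.C_mul, inv_mul_cancel₀ hc] using hhom.C_mul c⁻¹

end WeightHomogeneousDxP

theorem IsGD.isWeightHomogeneous {R : ℕ → Polynomial (MvPolynomial ℕ ℝ)} (hR : IsGD R) (n : ℕ) :
    IsWeightHomogeneous (2 * n) (R n) := by
  obtain ⟨hR0, hnc, hrec⟩ := hR
  induction n with
  | zero => simpa [hR0] using isWeightHomogeneous_one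
  | succ n ih =>
    refine .of_C_mul_dxP (c := 2 * n + 1) (by positivity) (hnc (n + 1) n.succ_pos) ?_
    rw [hrec n, mul_assoc]
    exact ((ih.C_mul (isHomogeneous_X ℝ 1)).add (ih.dxP.C_mul (isHomogeneous_C_mul_X 2 0))).add
      ((ih.dxP.dxP.dxP.X_pow_mul 2).C_mul (isHomogeneous_C _ _))

/-- each `R_n` involves only even powers of `λ`, and writing
`R_n = Σ_g R_n^{(g)} λ^{2g}`, the coefficient `R_n^{(g)}` is homogeneous of total
degree `n − g` in the variables `u_k`, and vanishes when `g > n`. -/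
theorem gelfandDickey_even_and_homogeneous :
    ∀ R : ℕ → Polynomial (MvPolynomial ℕ ℝ), IsGD R → ∀ n : ℕ,
      (∀ i : ℕ, Odd i → (R n).coeff i = 0) ∧
      (∀ g : ℕ, g ≤ n → ((R n).coeff (2 * g)).IsHomogeneous (n - g)) ∧
      (∀ g : ℕ, n < g → (R n).coeff (2 * g) = 0) := by
  intro R hR n
  have hw := hR.isWeightHomogeneous n
  refine ⟨fun i hi => ?_, fun g hg => ?_, fun g hg => ?_⟩
  · by_contra h
    obtain ⟨m, hm, -⟩ := hw i h
    obtain ⟨k, rfl⟩ := hi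
    omega
  · by_cases h : (R n).coeff (2 * g) = 0
    · rw [h]
      exact isHomogeneous_zero _ _ _
    obtain ⟨m, hm, hhom⟩ := hw _ h
    rwa [show n - g = m by omega]
  · by_contra h
    obtain ⟨m, hm, -⟩ := hw _ h
    omega
end
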